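/- Let S be a generating subset of an abelian group G with 0 ∈ S and S ≠ G, and let H be a 1-atom of S with 0 ∈ H. Then H is a subgroup of G, and moreover κ_1(S) ≥ |S|/2. -/

import Mathlib

open Pointwise

variable {G : Type*} [AddCommGroup G]

/-- The boundary of `X` with respect to `S`: `∂(X) = (X + S) \ X`. -/
def bdry (S X : Set G) : Set G := (X + S) \ X

/-- The co-image of `X` with respect to `S`: `∇(X) = G \ (X + S)`. -/
def coimg (S X : Set G) : Set G := (X + S)ᶜ

/-- `S` is `k`-separable: some finite `X` has `|X| ≥ k` and `|∇(X)| ≥ k`. -/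
def IsSep (S : Set G) (k : ℕ) : Prop :=
  ∃ X : Set G, X.Finite ∧ k ≤ X.encard ∧ k ≤ (coimg S X).encard

/-- The `k`-th connectivity `κ_k(S) = min {|∂(X)| : X finite, |X| ≥ k, |∇(X)| ≥ k}`. -/
noncomputable def kappa (S : Set G) (k : ℕ) : ℕ∞ :=
  ⨅ X ∈ {X : Set G | X.Finite ∧ k ≤ X.encard ∧ k ≤ (coimg S X).encard}, (bdry S X).encard

/-- `X` is a `k`-fragment of `S`. -/
def IsFragment (S X : Set G) (k : ℕ) : Prop :=
  X.Finite ∧ k ≤ X.encard ∧ k ≤ (coimg S X).encard ∧ (bdry S X).encard = kappa S k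

/-- `X` is a `k`-atom of `S`: a `k`-fragment of minimum cardinality. -/
def IsAtomK (S X : Set G) (k : ℕ) : Prop :=
  IsFragment S X k ∧ ∀ Y : Set G, IsFragment S Y k → X.encard ≤ Y.encard

/-!
Submodularity of `X ↦ |∂(X)|` shows that a 1-atom `A` and a 1-fragment `F` that meet satisfy
`A ⊆ F`, unless `(A ∪ F) + S = G`. Applied to `A` and its translates `-a + A` (`a ∈ A`), this
makes an atom through `0` closed under subtraction, i.e. a subgroup.

In the exceptional covering case `G` is finite, `X ↦ ∇(X)` turns `S`-fragments into
`(-S)`-fragments, `κ₁(-S) = κ₁(S)`, and counting `G = (A ∪ F) ⊔ ∂(A ∪ F)` against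
`G = F ⊔ ∂(F) ⊔ ∇(F)` gives `|∇(F)| < |A|`: the atoms of `-S` are strictly smaller than those
of `S`. Then `-S` has no covering pair, so its atom through `0` is a subgroup, hence symmetric,
hence an `S`-fragment smaller than `A`. So covering pairs do not exist.

For the bound, pick `s ∈ S \ H` (it exists since `S` generates `G` and `H ≠ G`); then `S \ H`
and `s + H` both lie in `∂(H)`, so `|S| ≤ |S ∩ H| + |S \ H| ≤ 2κ₁(S)`.
-/

open Set

section Fragments

variable {S X : Set G}

def IsSeparating (S X : Set G) : Prop :=
  X.Finite ∧ X.Nonempty ∧ (coimg S X).Nonempty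

lemma kappa_le_encard_bdry (hX : IsSeparating S X) : kappa S 1 ≤ (bdry S X).encard :=
  biInf_le _ ⟨hX.1, by simpa using hX.2.1, by simpa using hX.2.2⟩

lemma le_kappa_one {n : ℕ∞} (h : ∀ X, IsSeparating S X → n ≤ (bdry S X).encard) :
    n ≤ kappa S 1 :=
  le_iInf₂ fun X hX => h X ⟨hX.1, by simpa using hX.2.1, by simpa using hX.2.2⟩

lemma isFragment_one_iff :
    IsFragment S X 1 ↔ IsSeparating S X ∧ (bdry S X).encard ≤ kappa S 1 := by
  refine ⟨fun ⟨hfin, hX, hcX, hbX⟩ => ⟨⟨hfin, by simpa using hX, by simpa using hcX⟩, hbX.le⟩,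
    fun ⟨hX, hbX⟩ => ⟨hX.1, by simpa using hX.2.1, by simpa using hX.2.2, ?_⟩⟩
  exact hbX.antisymm (kappa_le_encard_bdry hX)

lemma IsFragment.isSeparating (hX : IsFragment S X 1) : IsSeparating S X :=
  (isFragment_one_iff.1 hX).1

lemma isSeparating_singleton (hne : S ≠ univ) (x : G) : IsSeparating S {x} := by
  refine ⟨finite_singleton x, singleton_nonempty x, ?_⟩
  rw [coimg, singleton_add, image_add_left, ← preimage_compl]
  exact (nonempty_compl.2 hne).preimage (add_left_surjective _)

lemma exists_isFragment (hne : S ≠ univ) : ∃ X, IsFragment S X 1 := by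
  have hsep : {X | IsSeparating S X}.Nonempty := ⟨{0}, isSeparating_singleton hne 0⟩
  let f : Set G → ℕ∞ := fun X => (bdry S X).encard
  exact ⟨Function.argminOn f _ hsep, isFragment_one_iff.2
    ⟨Function.argminOn_mem f _ hsep, le_kappa_one fun Y hY => Function.argminOn_le f _ hY⟩⟩

lemma exists_isAtomK (hne : S ≠ univ) : ∃ A, IsAtomK S A 1 := by
  have hfrag : {X | IsFragment S X 1}.Nonempty := exists_isFragment hne
  exact ⟨Function.argminOn encard _ hfrag, Function.argminOn_mem _ _ hfrag,
    fun Y hY => Function.argminOn_le encard {X | IsFragment S X 1} hY⟩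

lemma encard_add_encard_bdry_add_encard_coimg (h0 : (0 : G) ∈ S) (X : Set G) :
    X.encard + (bdry S X).encard + (coimg S X).encard = (univ : Set G).encard := by
  rw [add_comm X.encard, bdry, encard_sdiff_add_encard_of_subset (subset_add_left X h0),
    coimg, encard_add_encard_compl]

end Fragments

section Translation

variable {S X : Set G}

lemma bdry_vadd (g : G) (X : Set G) : bdry S (g +ᵥ X) = g +ᵥ bdry S X := by
  rw [bdry, bdry, vadd_add_assoc, vadd_set_sdiff]

lemma coimg_vadd (g : G) (X : Set G) : coimg S (g +ᵥ X) = g +ᵥ coimg S X := by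
  rw [coimg, coimg, vadd_add_assoc, vadd_set_compl]

lemma IsFragment.vadd (hX : IsFragment S X 1) (g : G) : IsFragment S (g +ᵥ X) 1 := by
  obtain ⟨hfin, hX, hcX, hbX⟩ := hX
  exact ⟨hfin.vadd_set, by rwa [encard_vadd_set], by rwa [coimg_vadd, encard_vadd_set],
    by rwa [bdry_vadd, encard_vadd_set]⟩

lemma IsAtomK.vadd (hX : IsAtomK S X 1) (g : G) : IsAtomK S (g +ᵥ X) 1 :=
  ⟨hX.1.vadd g, fun Y hY => (encard_vadd_set g X).trans_le (hX.2 Y hY)⟩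

lemma exists_isAtomK_zero_mem (hne : S ≠ univ) : ∃ A, IsAtomK S A 1 ∧ (0 : G) ∈ A := by
  obtain ⟨A, hA⟩ := exists_isAtomK hne
  obtain ⟨a, ha⟩ := hA.1.isSeparating.2.1
  exact ⟨-a +ᵥ A, hA.vadd (-a), neg_add_cancel a ▸ vadd_mem_vadd_set ha⟩

end Translation

section Submodularity

variable {S A F : Set G}

lemma encard_bdry_union_add_encard_bdry_inter_le (S X Y : Set G) :
    (bdry S (X ∪ Y)).encard + (bdry S (X ∩ Y)).encard
      ≤ (bdry S X).encard + (bdry S Y).encard := by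
  set Q := ((X + S) ∩ (Y + S)) \ (X ∩ Y)
  have hQ : bdry S (X ∩ Y) ⊆ Q := sdiff_subset_sdiff_left inter_add_subset
  have hunion : bdry S (X ∪ Y) ∪ Q ⊆ bdry S X ∪ bdry S Y := by
    rintro g (⟨hg, hgXY⟩ | ⟨⟨hgX, hgY⟩, hgXY⟩)
    · rw [union_add] at hg
      exact hg.imp (fun h => ⟨h, fun hx => hgXY (.inl hx)⟩) (fun h => ⟨h, fun hy => hgXY (.inr hy)⟩)
    · by_cases hx : g ∈ X
      · exact .inr ⟨hgY, fun hy => hgXY ⟨hx, hy⟩⟩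
      · exact .inl ⟨hgX, hx⟩
  have hinter : bdry S (X ∪ Y) ∩ Q ⊆ bdry S X ∩ bdry S Y := by
    rintro g ⟨⟨-, hgXY⟩, ⟨hgX, hgY⟩, -⟩
    exact ⟨⟨hgX, fun hx => hgXY (.inl hx)⟩, ⟨hgY, fun hy => hgXY (.inr hy)⟩⟩
  calc (bdry S (X ∪ Y)).encard + (bdry S (X ∩ Y)).encard
      ≤ (bdry S (X ∪ Y)).encard + Q.encard := by gcongr
    _ = (bdry S (X ∪ Y) ∪ Q).encard + (bdry S (X ∪ Y) ∩ Q).encard :=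
        (encard_union_add_encard_inter _ _).symm
    _ ≤ (bdry S X ∪ bdry S Y).encard + (bdry S X ∩ bdry S Y).encard :=
        add_le_add (encard_mono hunion) (encard_mono hinter)
    _ = (bdry S X).encard + (bdry S Y).encard := encard_union_add_encard_inter _ _

lemma IsFragment.encard_bdry_union_add_encard_bdry_inter_le (hA : IsFragment S A 1)
    (hF : IsFragment S F 1) :
    (bdry S (A ∪ F)).encard + (bdry S (A ∩ F)).encard ≤ kappa S 1 + kappa S 1 := by
  calc _ ≤ (bdry S A).encard + (bdry S F).encard :=
        _root_.encard_bdry_union_add_encard_bdry_inter_le S A F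
    _ = kappa S 1 + kappa S 1 := by rw [hA.2.2.2, hF.2.2.2]

lemma IsFragment.isSeparating_inter (hA : IsFragment S A 1) (hi : (A ∩ F).Nonempty) :
    IsSeparating S (A ∩ F) :=
  ⟨hA.1.subset inter_subset_left, hi,
    hA.isSeparating.2.2.mono (compl_subset_compl.2 (add_subset_add_right inter_subset_left))⟩

lemma IsFragment.isSeparating_union (hA : IsFragment S A 1) (hF : IsFragment S F 1)
    (hu : (coimg S (A ∪ F)).Nonempty) : IsSeparating S (A ∪ F) :=
  ⟨hA.1.union hF.1, hA.isSeparating.2.1.mono subset_union_left, hu⟩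

lemma IsFragment.inter (hk : kappa S 1 ≠ ⊤) (hA : IsFragment S A 1) (hF : IsFragment S F 1)
    (hi : (A ∩ F).Nonempty) (hu : (coimg S (A ∪ F)).Nonempty) : IsFragment S (A ∩ F) 1 := by
  refine isFragment_one_iff.2 ⟨hA.isSeparating_inter hi, (ENat.add_le_add_iff_left hk).1 ?_⟩
  calc kappa S 1 + (bdry S (A ∩ F)).encard
      ≤ (bdry S (A ∪ F)).encard + (bdry S (A ∩ F)).encard := by
        gcongr; exact kappa_le_encard_bdry (hA.isSeparating_union hF hu)
    _ ≤ kappa S 1 + kappa S 1 := hA.encard_bdry_union_add_encard_bdry_inter_le hF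

lemma IsFragment.encard_bdry_union_le (hk : kappa S 1 ≠ ⊤) (hA : IsFragment S A 1)
    (hF : IsFragment S F 1) (hi : (A ∩ F).Nonempty) :
    (bdry S (A ∪ F)).encard ≤ kappa S 1 := by
  refine (ENat.add_le_add_iff_left hk).1 ?_
  calc kappa S 1 + (bdry S (A ∪ F)).encard
      ≤ (bdry S (A ∪ F)).encard + (bdry S (A ∩ F)).encard := by
        rw [add_comm]; gcongr; exact kappa_le_encard_bdry (hA.isSeparating_inter hi)
    _ ≤ kappa S 1 + kappa S 1 := hA.encard_bdry_union_add_encard_bdry_inter_le hF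

lemma IsAtomK.subset_of_isFragment (hk : kappa S 1 ≠ ⊤) (hA : IsAtomK S A 1)
    (hF : IsFragment S F 1) (hi : (A ∩ F).Nonempty) (hu : (coimg S (A ∪ F)).Nonempty) :
    A ⊆ F := by
  have hAF : A ∩ F = A :=
    hA.1.1.eq_of_subset_of_encard_le' inter_subset_left (hA.2 _ (hA.1.inter hk hF hi hu))
  exact hAF ▸ inter_subset_right

end Submodularity

def IsCoveringPair (S A F : Set G) : Prop :=
  IsAtomK S A 1 ∧ IsFragment S F 1 ∧ (A ∩ F).Nonempty ∧ coimg S (A ∪ F) = ∅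

lemma IsAtomK.exists_addSubgroup {S A : Set G} (hk : kappa S 1 ≠ ⊤)
    (hS : ∀ A' F, ¬ IsCoveringPair S A' F) (hA : IsAtomK S A 1) (h0A : (0 : G) ∈ A) :
    ∃ K : AddSubgroup G, A = K := by
  have hsubset {A' F : Set G} (hA' : IsAtomK S A' 1) (hF : IsFragment S F 1)
      (hi : (A' ∩ F).Nonempty) : A' ⊆ F :=
    hA'.subset_of_isFragment hk hF hi (nonempty_iff_ne_empty.2 fun h => hS A' F ⟨hA', hF, hi, h⟩)
  have htransl (a : G) (ha : a ∈ A) : -a +ᵥ A = A := by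
    have hB := hA.vadd (-a)
    have h0B : (0 : G) ∈ -a +ᵥ A := neg_add_cancel a ▸ vadd_mem_vadd_set ha
    exact (hsubset hB hA.1 ⟨0, h0B, h0A⟩).antisymm (hsubset hA hB.1 ⟨0, h0A, h0B⟩)
  refine ⟨AddSubgroup.ofSub A ⟨0, h0A⟩ fun x hx y hy => ?_, rfl⟩
  rw [← htransl y hy, add_comm]
  exact vadd_mem_vadd_set hx

section CoveringPair

variable {S A F : Set G}

lemma IsCoveringPair.encard_univ_le (h0 : (0 : G) ∈ S) (hk : kappa S 1 ≠ ⊤)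
    (h : IsCoveringPair S A F) : (univ : Set G).encard ≤ (A ∪ F).encard + kappa S 1 := by
  obtain ⟨hA, hF, hi, hu⟩ := h
  rw [← encard_add_encard_bdry_add_encard_coimg h0, hu, encard_empty, add_zero]
  gcongr
  exact hA.1.encard_bdry_union_le hk hF hi

lemma IsCoveringPair.finite_univ (h0 : (0 : G) ∈ S) (hk : kappa S 1 ≠ ⊤)
    (h : IsCoveringPair S A F) : (univ : Set G).Finite := by
  rw [← encard_ne_top_iff]
  refine ne_top_of_le_ne_top ?_ (h.encard_univ_le h0 hk)
  exact WithTop.add_ne_top.2 ⟨encard_ne_top_iff.2 (h.1.1.1.union h.2.1.1), hk⟩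

lemma IsCoveringPair.encard_coimg_lt (h0 : (0 : G) ∈ S) (hk : kappa S 1 ≠ ⊤)
    (h : IsCoveringPair S A F) : (coimg S F).encard < A.encard := by
  have hF := h.2.1
  have hF_add_coimg : F.encard + (coimg S F).encard ≤ (A ∪ F).encard := by
    refine (ENat.add_le_add_iff_left hk).1 ?_
    calc kappa S 1 + (F.encard + (coimg S F).encard)
        = (univ : Set G).encard := by
          rw [← encard_add_encard_bdry_add_encard_coimg h0 F, hF.2.2.2]; ring
      _ ≤ kappa S 1 + (A ∪ F).encard := by rw [add_comm]; exact h.encard_univ_le h0 hk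
  have hcoimg_add_inter : (coimg S F).encard + (A ∩ F).encard ≤ A.encard := by
    refine (ENat.add_le_add_iff_left (encard_ne_top_iff.2 hF.1)).1 ?_
    calc F.encard + ((coimg S F).encard + (A ∩ F).encard)
        ≤ (A ∪ F).encard + (A ∩ F).encard := by rw [← add_assoc]; gcongr
      _ = F.encard + A.encard := by rw [encard_union_add_encard_inter, add_comm]
  have hA : A.encard ≠ ⊤ := encard_ne_top_iff.2 h.1.1.1
  refine (ENat.add_one_le_iff (ne_top_of_le_ne_top hA (le_self_add.trans hcoimg_add_inter))).1 ?_
  calc (coimg S F).encard + 1 ≤ (coimg S F).encard + (A ∩ F).encard := by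
        gcongr; exact one_le_encard_iff_nonempty.2 h.2.2.1
    _ ≤ A.encard := hcoimg_add_inter

end CoveringPair

section Duality

variable {S X F : Set G}

lemma bdry_neg_coimg_subset (S X : Set G) : bdry (-S) (coimg S X) ⊆ bdry S X := by
  rintro z ⟨⟨y, hy, s, hs, rfl⟩, hz⟩
  rw [coimg, mem_compl_iff, not_not] at hz
  refine ⟨hz, fun hzX => hy ⟨y + s, hzX, -s, hs, add_neg_cancel_right y s⟩⟩

lemma subset_coimg_neg_coimg (S X : Set G) : X ⊆ coimg (-S) (coimg S X) := by
  rintro x hx ⟨y, hy, s, hs, rfl⟩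
  exact hy ⟨y + s, hx, -s, hs, add_neg_cancel_right y s⟩

lemma IsFragment.isSeparating_coimg (hfin : (univ : Set G).Finite) (hF : IsFragment S F 1) :
    IsSeparating (-S) (coimg S F) :=
  ⟨hfin.subset (subset_univ _), hF.isSeparating.2.2,
    hF.isSeparating.2.1.mono (subset_coimg_neg_coimg S F)⟩

lemma kappa_neg_le (hfin : (univ : Set G).Finite) (hne : S ≠ univ) :
    kappa (-S) 1 ≤ kappa S 1 := by
  obtain ⟨F, hF⟩ := exists_isFragment hne
  calc kappa (-S) 1 ≤ (bdry (-S) (coimg S F)).encard :=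
        kappa_le_encard_bdry (hF.isSeparating_coimg hfin)
    _ ≤ (bdry S F).encard := encard_mono (bdry_neg_coimg_subset S F)
    _ = kappa S 1 := hF.2.2.2

lemma neg_ne_univ {S : Set G} (hne : S ≠ univ) : -S ≠ univ := by
  rwa [Ne, ← neg_inj, neg_neg, neg_univ]

lemma kappa_neg (hfin : (univ : Set G).Finite) (hne : S ≠ univ) :
    kappa (-S) 1 = kappa S 1 := by
  refine (kappa_neg_le hfin hne).antisymm ?_
  simpa using kappa_neg_le (S := -S) hfin (neg_ne_univ hne)

lemma IsFragment.isFragment_neg_coimg (hfin : (univ : Set G).Finite) (hne : S ≠ univ)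
    (hF : IsFragment S F 1) :
    IsFragment (-S) (coimg S F) 1 := by
  refine isFragment_one_iff.2 ⟨hF.isSeparating_coimg hfin, ?_⟩
  rw [kappa_neg hfin hne, ← hF.2.2.2]
  exact encard_mono (bdry_neg_coimg_subset S F)

lemma IsFragment.of_neg (hsymm : -X = X) (hk : kappa (-S) 1 = kappa S 1)
    (hX : IsFragment (-S) X 1) : IsFragment S X 1 := by
  have hadd : -(X + -S) = X + S := by rw [neg_add, neg_neg, hsymm]
  have hbdry : bdry S X = -bdry (-S) X := by rw [bdry, bdry, ← hadd]; exact congrArg _ hsymm.symm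
  have hcoimg : coimg S X = -coimg (-S) X := by rw [coimg, coimg, ← hadd, compl_neg]
  exact ⟨hX.1, hX.2.1, by rw [hcoimg, encard_neg]; exact hX.2.2.1,
    by rw [hbdry, encard_neg, hX.2.2.2, hk]⟩

end Duality

theorem not_isCoveringPair {S : Set G} (h0 : (0 : G) ∈ S) (hne : S ≠ univ)
    (hk : kappa S 1 ≠ ⊤) (A F : Set G) : ¬ IsCoveringPair S A F := by
  intro hAF
  have hfin := hAF.finite_univ h0 hk
  have hkneg := kappa_neg hfin hne
  have hC : IsFragment (-S) (coimg S F) 1 := hAF.2.1.isFragment_neg_coimg hfin hne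
  have hCA := hAF.encard_coimg_lt h0 hk
  -- a covering pair for `-S` would make the atoms of `S` strictly smaller than those of `-S`
  have hnoneg (A' F' : Set G) : ¬ IsCoveringPair (-S) A' F' := by
    intro hAF'
    have hD : IsFragment S (coimg (-S) F') 1 := by
      simpa using hAF'.2.1.isFragment_neg_coimg hfin (neg_ne_univ hne)
    have hDA' := hAF'.encard_coimg_lt (by simpa using h0) (hkneg ▸ hk)
    exact (((hAF.1.2 _ hD).trans_lt hDA').trans_le (hAF'.1.2 _ hC) |>.trans hCA).false
  obtain ⟨K', hK', h0K'⟩ := exists_isAtomK_zero_mem (neg_ne_univ hne)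
  obtain ⟨K, rfl⟩ := hK'.exists_addSubgroup (hkneg ▸ hk) hnoneg h0K'
  have hK : IsFragment S K 1 := hK'.1.of_neg (by simp) hkneg
  exact ((hAF.1.2 _ hK).trans (hK'.2 _ hC) |>.trans_lt hCA).false

lemma IsAtomK.eq_singleton_zero_of_kappa_eq_top {S H : Set G} (hne : S ≠ univ)
    (hk : kappa S 1 = ⊤) (hH : IsAtomK S H 1) (h0H : (0 : G) ∈ H) : H = {0} := by
  have h0 : IsFragment S {0} 1 :=
    isFragment_one_iff.2 ⟨isSeparating_singleton hne 0, hk ▸ le_top⟩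
  refine (hH.1.1.eq_of_subset_of_encard_le' (singleton_subset_iff.2 h0H) ?_).symm
  simpa using hH.2 _ h0

lemma IsFragment.not_subset_of_closure_eq_top {S : Set G} (hgen : AddSubgroup.closure S = ⊤)
    (h0 : (0 : G) ∈ S) {K : AddSubgroup G} (hK : IsFragment S K 1) : ¬ S ⊆ K := by
  intro hSK
  obtain ⟨x, hx⟩ := hK.isSeparating.2.2
  have hxK : x ∈ K := (AddSubgroup.closure_le K).2 hSK (hgen ▸ AddSubgroup.mem_top x)
  exact hx (subset_add_left _ h0 hxK)

lemma encard_le_two_mul_encard_bdry {S : Set G} (K : AddSubgroup G) {s : G} (hs : s ∈ S)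
    (hsK : s ∉ K) : S.encard ≤ 2 * (bdry S K).encard := by
  have hdiff : S \ K ⊆ bdry S K := fun x ⟨hxS, hxK⟩ => ⟨⟨0, K.zero_mem, x, hxS, zero_add x⟩, hxK⟩
  have htransl : s +ᵥ (K : Set G) ⊆ bdry S K := by
    rintro _ ⟨k, hk, rfl⟩
    refine ⟨⟨k, hk, s, hs, add_comm k s⟩, fun hsk => hsK ?_⟩
    simpa using K.sub_mem hsk hk
  calc S.encard ≤ (S ∩ K).encard + (S \ K).encard := by
        rw [← encard_union_eq (disjoint_sdiff_inter.symm), inter_union_sdiff]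
    _ ≤ (s +ᵥ (K : Set G)).encard + (S \ K).encard := by
        rw [encard_vadd_set]; gcongr; exact inter_subset_right
    _ ≤ 2 * (bdry S K).encard := by
        rw [two_mul]; exact add_le_add (encard_mono htransl) (encard_mono hdiff)

/-- A `1`-atom containing `0` is a subgroup, and `κ₁(S) ≥ |S|/2`. -/
theorem stmt_5 (S : Set G) (hgen : AddSubgroup.closure S = ⊤) (h0 : (0 : G) ∈ S)
    (hne : S ≠ Set.univ) (H : Set G) (hH : IsAtomK S H 1) (h0H : (0 : G) ∈ H) :
    (∃ K : AddSubgroup G, H = (K : Set G)) ∧ S.encard ≤ 2 * kappa S 1 := by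
  by_cases hk : kappa S 1 = ⊤
  · refine ⟨⟨⊥, by rw [hH.eq_singleton_zero_of_kappa_eq_top hne hk h0H, AddSubgroup.coe_bot]⟩, ?_⟩
    rw [hk, ENat.mul_top two_ne_zero]
    exact le_top
  obtain ⟨K, rfl⟩ := hH.exists_addSubgroup hk (not_isCoveringPair h0 hne hk) h0H
  obtain ⟨s, hs, hsK⟩ := not_subset.1 (hH.1.not_subset_of_closure_eq_top hgen h0)
  exact ⟨⟨K, rfl⟩, hH.1.2.2.2 ▸ encard_le_two_mul_encard_bdry K hs hsK⟩
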